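/- Let t be a positive integer and let ξ₁,…,ξ_t be (the traces of) t independent random walks on a graph G, each started at x and stopped upon exiting a finite set B ⊆ G, which together generate the stopped IDLA aggregate A_t(x ↦ B). Let Q ⊆ B, let J be uniform on {1,…,t} independent of the walks, and let Γ = {j : ξ_j hits Q before exiting B}. Then conditionally on the event {B ⊆ A_t(x ↦ B)}, the probability that J ∈ Γ is at least |Q|/t. Consequently, for a single random walk ξ started at x and stopped upon exiting B, P[ξ ∩ Q ≠ ∅] ≥ P[B ⊆ A_t(x ↦ B)] · |Q|/t. -/

import Mathlib

/-!
On the event `B ⊆ A_t(x ↦ B)` every vertex of `Q ⊆ B` was added by its own walk, so at least `|Q|`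
of the `t` walks hit `Q`. Integrating this pointwise count over the event (a Markov-type bound
for the number of walks hitting `Q`) gives `|Q| P[B ⊆ A_t] ≤ ∑ⱼ P[ξⱼ hits Q, B ⊆ A_t]`, and the
right-hand side is at most `t P[ξ hits Q]` since the walks hit `Q` with the same probability.
-/

open MeasureTheory ENNReal

/-- Replace each `S j` by its measurable hull and `E` by the measurable set where at
least `k` of the hulls overlap, then apply Markov's inequality to the overlap count. -/
theorem natCast_mul_measure_le_sum_measure {Ω ι : Type*} [MeasurableSpace Ω] [Fintype ι]
    (μ : Measure Ω) (S : ι → Set Ω) {E : Set Ω} {k : ℕ}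
    (hE : ∀ ω ∈ E, ∃ s : Finset ι, k ≤ s.card ∧ ∀ j ∈ s, ω ∈ S j) :
    k * μ E ≤ ∑ j, μ (S j) := by
  set M : ι → Set Ω := fun j => toMeasurable μ (S j)
  set f : Ω → ℝ≥0∞ := fun ω => ∑ j, (M j).indicator 1 ω
  have hf : Measurable f :=
    Finset.measurable_sum _ fun j _ => measurable_one.indicator (measurableSet_toMeasurable μ _)
  have hEf : E ⊆ {ω | (k : ℝ≥0∞) ≤ f ω} := by
    intro ω hω
    obtain ⟨s, hks, hs⟩ := hE ω hω
    calc (k : ℝ≥0∞) ≤ ∑ _j ∈ s, 1 := by simpa using hks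
      _ = ∑ j ∈ s, (M j).indicator 1 ω :=
        Finset.sum_congr rfl fun j hj =>
          (Set.indicator_of_mem (subset_toMeasurable μ _ (hs j hj)) (1 : Ω → ℝ≥0∞)).symm
      _ ≤ f ω := Finset.sum_le_sum_of_subset (Finset.subset_univ s)
  calc (k : ℝ≥0∞) * μ E ≤ k * μ {ω | (k : ℝ≥0∞) ≤ f ω} := by gcongr
    _ ≤ ∫⁻ ω, f ω ∂μ := mul_meas_ge_le_lintegral hf _
    _ = ∑ j, μ (M j) := by
      rw [lintegral_finsetSum _ fun j _ =>
        measurable_one.indicator (measurableSet_toMeasurable μ _)]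
      exact Finset.sum_congr rfl fun j _ =>
        lintegral_indicator_one (measurableSet_toMeasurable μ _)
    _ = ∑ j, μ (S j) := Finset.sum_congr rfl fun j _ => measure_toMeasurable _

theorem exists_finset_card_le_of_injOn {V ι : Type*} {Q : Finset V} {X : ι → Set V}
    {f : V → ι} (hf : Set.InjOn f Q) (hQ : ∀ q ∈ Q, q ∈ X (f q)) :
    ∃ s : Finset ι, Q.card ≤ s.card ∧ ∀ j ∈ s, ∃ q ∈ Q, q ∈ X j := by
  classical
  refine ⟨Q.image f, (Finset.card_image_of_injOn hf).ge, fun j hj => ?_⟩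
  obtain ⟨q, hq, rfl⟩ := Finset.mem_image.mp hj
  exact ⟨q, hq, hQ q hq⟩

theorem stmt_0_general {Ω V : Type*} [MeasurableSpace Ω]
    (P : Measure Ω)
    (t : ℕ) (ht : 0 < t) (ξ : Fin t → Ω → Set V)
    (Q B : Finset V) (hQB : Q ⊆ B)
    (Agg : Ω → Finset V)
    -- generation: each aggregate vertex was reached by a distinct walk,
    -- whose (stopped) trace therefore contains it
    (hgen : ∀ ω : Ω, ∃ f : V → Fin t,
      Set.InjOn f (Agg ω) ∧ ∀ v ∈ Agg ω, v ∈ ξ (f v) ω)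
    -- the walks are identically distributed, as far as hitting `Q` goes
    (hiid : ∀ j : Fin t,
      P {ω | ∃ q ∈ Q, q ∈ ξ j ω} = P {ω | ∃ q ∈ Q, q ∈ ξ ⟨0, ht⟩ ω}) :
    -- (i) the uniform-index statement: summing over the `t` equally likely
    -- values of the independent uniform index `J`, restricted to the event
    -- `{B ⊆ Agg}`, the chance that walk `J` hits `Q` is at least `|Q|/t`
    (Q.card : ℝ≥0∞) * P {ω | ↑B ⊆ (Agg ω : Set V)} ≤
      ∑ j : Fin t, P ({ω | ∃ q ∈ Q, q ∈ ξ j ω} ∩ {ω | ↑B ⊆ (Agg ω : Set V)}) ∧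
    -- (ii) consequence for a single walk
    P {ω | ↑B ⊆ (Agg ω : Set V)} * (Q.card : ℝ≥0∞) / (t : ℝ≥0∞) ≤
      P {ω | ∃ q ∈ Q, q ∈ ξ ⟨0, ht⟩ ω} := by
  set E := {ω | ↑B ⊆ (Agg ω : Set V)}
  set A : Fin t → Set Ω := fun j => {ω | ∃ q ∈ Q, q ∈ ξ j ω}
  have hcover : (Q.card : ℝ≥0∞) * P E ≤ ∑ j, P (A j ∩ E) := by
    refine natCast_mul_measure_le_sum_measure P _ fun ω hω => ?_
    obtain ⟨f, hinj, hvis⟩ := hgen ω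
    have hQAgg : Q ⊆ Agg ω := fun q hq => by exact_mod_cast hω (hQB hq)
    obtain ⟨s, hcard, hs⟩ := exists_finset_card_le_of_injOn (X := fun j => ξ j ω)
      (hinj.mono (by exact_mod_cast hQAgg)) fun q hq => hvis q (hQAgg hq)
    exact ⟨s, hcard, fun j hj => ⟨hs j hj, hω⟩⟩
  refine ⟨hcover, ENNReal.div_le_of_le_mul ?_⟩
  calc P E * Q.card = Q.card * P E := mul_comm _ _
    _ ≤ ∑ j, P (A j ∩ E) := hcover
    _ ≤ ∑ _j : Fin t, P (A ⟨0, ht⟩) :=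
      Finset.sum_le_sum fun j _ => (measure_mono Set.inter_subset_left).trans_eq (hiid j)
    _ = P (A ⟨0, ht⟩) * t := by simp [mul_comm]

/-- Hitting-probability lemma (Lemma 1 of the paper). The `t` walks
`ξ j : Ω → Set V` (traces, stopped upon exiting `B`) generate the stopped
IDLA aggregate `Agg : Ω → Finset V`; the generation property is encoded by
an injection assigning to each vertex of the aggregate outside the initial
seed a distinct walk whose trace visits it.  Then, given `Q ⊆ B`:
(i) on the event `{B ⊆ Agg}`, at least `|Q|` of the walks hit `Q`, so the
probability that a uniformly chosen walk hits `Q`, restricted to that event,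
is at least `(|Q|/t) P[B ⊆ Agg]`; and (ii) consequently, a single walk
(distributed as each `ξ j`) hits `Q` with probability at least
`P[B ⊆ Agg] ⬝ |Q| / t`. -/
theorem stmt_0 {Ω V : Type*} [MeasurableSpace Ω] [DecidableEq V] [Fintype V]
    (P : Measure Ω) [IsProbabilityMeasure P]
    (t : ℕ) (ht : 0 < t) (ξ : Fin t → Ω → Set V)
    (Q B : Finset V) (hQB : Q ⊆ B)
    (Agg : Ω → Finset V)
    -- generation: each aggregate vertex was reached by a distinct walk,
    -- whose (stopped) trace therefore contains it
    (hgen : ∀ ω : Ω, ∃ f : V → Fin t,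
      Set.InjOn f (Agg ω) ∧ ∀ v ∈ Agg ω, v ∈ ξ (f v) ω)
    -- the walks are identically distributed, as far as hitting `Q` goes
    (hiid : ∀ j : Fin t,
      P {ω | ∃ q ∈ Q, q ∈ ξ j ω} = P {ω | ∃ q ∈ Q, q ∈ ξ ⟨0, ht⟩ ω})
    (hmeas : ∀ j : Fin t, MeasurableSet {ω | ∃ q ∈ Q, q ∈ ξ j ω})
    (hmeasE : MeasurableSet {ω | ↑B ⊆ (Agg ω : Set V)}) :
    -- (i) the uniform-index statement: summing over the `t` equally likely
    -- values of the independent uniform index `J`, restricted to the event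
    -- `{B ⊆ Agg}`, the chance that walk `J` hits `Q` is at least `|Q|/t`
    (Q.card : ℝ≥0∞) * P {ω | ↑B ⊆ (Agg ω : Set V)} ≤
      ∑ j : Fin t, P ({ω | ∃ q ∈ Q, q ∈ ξ j ω} ∩ {ω | ↑B ⊆ (Agg ω : Set V)}) ∧
    -- (ii) consequence for a single walk
    P {ω | ↑B ⊆ (Agg ω : Set V)} * (Q.card : ℝ≥0∞) / (t : ℝ≥0∞) ≤
      P {ω | ∃ q ∈ Q, q ∈ ξ ⟨0, ht⟩ ω} :=
  stmt_0_general P t ht ξ Q B hQB Agg hgen hiid
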